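/- Let s_1,...,s_{n+1} be exchangeable and almost surely distinct, and for β ∈ [0,1] let q̂(β) be the ⌈(n+1)β⌉-th order statistic of s_1,...,s_n (defined when ⌈(n+1)β⌉ ≤ n). Then the map β ↦ P(s_{n+1} ≤ q̂(β)) equals ⌈(n+1)β⌉/(n+1), which is nondecreasing in β. -/

import Mathlib

/-!
By exchangeability the rank of `s (last n)` among all `n + 1` scores has the same law as
the rank of any other score, and almost surely the ranks are a permutation of
`0, …, n`; so that rank is uniform on `{0, …, n}`. The last score is at most the
`k`-th smallest of the first `n` scores exactly when its rank is below `k`, an event of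
probability `k / (n + 1)`.
-/

open MeasureTheory

/-- A finite family of real random variables is exchangeable if its joint law is
invariant under every permutation of the indices. -/
def Exchangeable {Ω : Type*} [MeasurableSpace Ω] {m : ℕ} (P : Measure Ω)
    (s : Fin m → Ω → ℝ) : Prop :=
  ∀ σ : Equiv.Perm (Fin m),
    Measure.map (fun ω i => s (σ i) ω) P = Measure.map (fun ω i => s i ω) P

/-- The `k`-th smallest value (0-indexed) of the tuple `v`. -/
noncomputable def orderStat {m : ℕ} (v : Fin m → ℝ) (k : Fin m) : ℝ :=
  v (Tuple.sort v k)

section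

open Finset Function

variable {m : ℕ}

section Rank

variable {α : Type*} [LinearOrder α]

def rank (u : Fin m → α) (j : Fin m) : ℕ := #{i | u i < u j}

lemma rank_comp_perm (u : Fin m → α) (σ : Equiv.Perm (Fin m)) (j : Fin m) :
    rank (u ∘ σ) j = rank u (σ j) :=
  card_equiv σ (by simp)

lemma rank_lt (u : Fin m → α) (j : Fin m) : rank u j < m :=
  (card_lt_card (filter_ssubset.2 ⟨j, mem_univ j, lt_irrefl (u j)⟩)).trans_eq (card_fin m)

lemma rank_lt_rank {u : Fin m → α} {j j' : Fin m} (h : u j < u j') : rank u j < rank u j' :=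
  card_lt_card <| (ssubset_iff_of_subset fun i hi =>
    mem_filter.2 ⟨mem_univ i, (mem_filter.1 hi).2.trans h⟩).2 ⟨j, by simpa using h, by simp⟩

lemma rank_injective {u : Fin m → α} (hu : Injective u) : Injective (rank u) := by
  intro j j' h
  by_contra hne
  rcases (hu.ne hne).lt_or_gt with hlt | hlt
  · exact (rank_lt_rank hlt).ne h
  · exact (rank_lt_rank hlt).ne' h

lemma card_rank_eq {u : Fin m → α} (hu : Injective u) {r : ℕ} (hr : r < m) :
    #{j | rank u j = r} = 1 := by
  have hbij : Bijective fun j => (⟨rank u j, rank_lt u j⟩ : Fin m) :=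
    Finite.injective_iff_bijective.1 fun j j' h => rank_injective hu (Fin.val_eq_of_eq h)
  obtain ⟨j₀, hj₀, huniq⟩ := hbij.existsUnique ⟨r, hr⟩
  simp only [Fin.mk.injEq] at hj₀ huniq
  exact card_eq_one.2 ⟨j₀, eq_singleton_iff_unique_mem.2 ⟨by simpa using hj₀, by simpa⟩⟩

lemma rank_last {n : ℕ} (v : Fin (n + 1) → α) :
    rank v (Fin.last n) = #{i : Fin n | v i.castSucc < v (Fin.last n)} := by
  simp only [rank, card_filter, Fin.sum_univ_castSucc, lt_irrefl, if_false, add_zero]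

end Rank

lemma le_orderStat_iff {w : Fin m → ℝ} (hw : Injective w) (t : ℝ) (k : Fin m) :
    t ≤ orderStat w k ↔ #{i | w i < t} ≤ k := by
  set σ := Tuple.sort w
  have hsorted : StrictMono (w ∘ σ) :=
    (Tuple.monotone_sort w).strictMono_of_injective (hw.comp σ.injective)
  rw [← card_equiv (s := {i | w (σ i) < t}) σ (by simp)]
  constructor
  · intro ht
    calc #{i | w (σ i) < t} ≤ #(Iio k) := card_le_card fun i hi =>
          mem_Iio.2 (hsorted.lt_iff_lt.1 ((mem_filter.1 hi).2.trans_le ht))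
      _ = k := Fin.card_Iio k
  · intro hcard
    by_contra! ht
    have hIic : Iic k ⊆ ({i | w (σ i) < t} : Finset _) := fun i hi =>
      mem_filter.2 ⟨mem_univ i, (hsorted.monotone (mem_Iic.1 hi)).trans_lt ht⟩
    have := (Fin.card_Iic k).symm.trans_le (card_le_card hIic)
    omega

lemma last_le_orderStat_iff {n : ℕ} {v : Fin (n + 1) → ℝ} (hv : Injective v) (k : Fin n) :
    v (Fin.last n) ≤ orderStat (fun i => v i.castSucc) k ↔ rank v (Fin.last n) ≤ k := by
  rw [rank_last]
  exact le_orderStat_iff (hv.comp (Fin.castSucc_injective n)) _ k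

lemma measurable_rank (j : Fin m) : Measurable fun u : Fin m → ℝ => rank u j := by
  simp only [rank, card_filter]
  exact Finset.measurable_sum _ fun i _ =>
    Measurable.ite (measurableSet_lt (measurable_pi_apply i) (measurable_pi_apply j))
      measurable_const measurable_const

variable {Ω : Type*} [MeasurableSpace Ω] {P : Measure Ω} {s : Fin m → Ω → ℝ}

lemma sum_measure_rank_eq_one [IsProbabilityMeasure P] (hmeas : ∀ i, Measurable (s i))
    (hdist : ∀ᵐ ω ∂P, Injective fun i => s i ω) {r : ℕ} (hr : r < m) :
    ∑ j, P {ω | rank (fun i => s i ω) j = r} = 1 := by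
  have hset (j : Fin m) : MeasurableSet {ω | rank (fun i => s i ω) j = r} :=
    (measurable_rank j).comp (measurable_pi_lambda _ hmeas) (measurableSet_singleton r)
  calc ∑ j, P {ω | rank (fun i => s i ω) j = r}
      = ∑ j, ∫⁻ ω, {ω | rank (fun i => s i ω) j = r}.indicator 1 ω ∂P := by
        simp_rw [lintegral_indicator_one (hset _)]
    _ = ∫⁻ ω, ∑ j, {ω | rank (fun i => s i ω) j = r}.indicator 1 ω ∂P :=
        (lintegral_finsetSum _ fun j _ => measurable_one.indicator (hset j)).symm
    _ = ∫⁻ _, 1 ∂P := lintegral_congr_ae <| hdist.mono fun ω hω => by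
        simp only [Set.indicator_apply, Set.mem_ofPred_eq, Pi.one_apply, sum_boole,
          card_rank_eq hω hr, Nat.cast_one]
    _ = 1 := by simp

lemma Exchangeable.measure_rank_eq_measure_rank (hmeas : ∀ i, Measurable (s i))
    (hexch : Exchangeable P s) (j j' : Fin m) (r : ℕ) :
    P {ω | rank (fun i => s i ω) j = r} = P {ω | rank (fun i => s i ω) j' = r} := by
  have hrank : MeasurableSet {u : Fin m → ℝ | rank u j = r} :=
    measurable_rank j (measurableSet_singleton r)
  have hswap : {ω | rank (fun i => s i ω) j' = r} =
      (fun ω i => s (Equiv.swap j j' i) ω) ⁻¹' {u | rank u j = r} := by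
    ext ω
    change _ ↔ rank ((fun i => s i ω) ∘ Equiv.swap j j') j = r
    rw [rank_comp_perm, Equiv.swap_apply_left]
    rfl
  rw [hswap, ← Measure.map_apply (measurable_pi_lambda _ fun i => hmeas _) hrank, hexch,
    Measure.map_apply (measurable_pi_lambda _ hmeas) hrank]
  rfl

lemma Exchangeable.measure_rank_eq [IsProbabilityMeasure P] (hmeas : ∀ i, Measurable (s i))
    (hexch : Exchangeable P s) (hdist : ∀ᵐ ω ∂P, Injective fun i => s i ω)
    (j : Fin m) {r : ℕ} (hr : r < m) :
    P {ω | rank (fun i => s i ω) j = r} = (m : ENNReal)⁻¹ := by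
  refine ENNReal.eq_inv_of_mul_eq_one_left ?_
  calc P {ω | rank (fun i => s i ω) j = r} * m
      = ∑ j' : Fin m, P {ω | rank (fun i => s i ω) j' = r} := by
        simp [hexch.measure_rank_eq_measure_rank hmeas _ j, mul_comm]
    _ = 1 := sum_measure_rank_eq_one hmeas hdist hr

lemma Exchangeable.measure_rank_lt [IsProbabilityMeasure P] (hmeas : ∀ i, Measurable (s i))
    (hexch : Exchangeable P s) (hdist : ∀ᵐ ω ∂P, Injective fun i => s i ω)
    (j : Fin m) {k : ℕ} (hk : k ≤ m) :
    P {ω | rank (fun i => s i ω) j < k} = k / m := by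
  have hrank : Measurable fun ω => rank (fun i => s i ω) j :=
    (measurable_rank j).comp (measurable_pi_lambda _ hmeas)
  calc P {ω | rank (fun i => s i ω) j < k}
      = P ((fun ω => rank (fun i => s i ω) j) ⁻¹' ↑(range k)) := by
        rw [coe_range]; rfl
    _ = ∑ r ∈ range k, P ((fun ω => rank (fun i => s i ω) j) ⁻¹' {r}) :=
        (sum_measure_preimage_singleton _ fun r _ => hrank (measurableSet_singleton r)).symm
    _ = ∑ r ∈ range k, (m : ENNReal)⁻¹ := sum_congr rfl fun r hr =>
        hexch.measure_rank_eq hmeas hdist j ((mem_range.1 hr).trans_le hk)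
    _ = k / m := by simp [div_eq_mul_inv]

end

/-- Coverage as a function of the nominal level: for exchangeable, a.s. distinct
scores, the probability that `s (last)` is at most the `⌈(n+1)β⌉`-th order statistic
of the first `n` scores equals `⌈(n+1)β⌉/(n+1)`, which is nondecreasing in `β`. -/
theorem conformal_coverage_step_function
    {Ω : Type*} [MeasurableSpace Ω] (P : Measure Ω) [IsProbabilityMeasure P]
    {n : ℕ} (s : Fin (n + 1) → Ω → ℝ) (hmeas : ∀ i, Measurable (s i))
    (hexch : Exchangeable P s)
    (hdist : ∀ᵐ ω ∂P, Function.Injective fun i => s i ω) :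
    (∀ β : ℝ, β ∈ Set.Icc (0 : ℝ) 1 →
      ∀ (h1 : 1 ≤ ⌈((n : ℝ) + 1) * β⌉₊) (hn : ⌈((n : ℝ) + 1) * β⌉₊ ≤ n),
        P {ω | s (Fin.last n) ω ≤
            orderStat (fun i : Fin n => s i.castSucc ω)
              ⟨⌈((n : ℝ) + 1) * β⌉₊ - 1, by omega⟩} =
          (⌈((n : ℝ) + 1) * β⌉₊ : ENNReal) / ((n : ENNReal) + 1)) ∧
    (∀ β β' : ℝ, β ∈ Set.Icc (0 : ℝ) 1 → β' ∈ Set.Icc (0 : ℝ) 1 → β ≤ β' →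
      (⌈((n : ℝ) + 1) * β⌉₊ : ENNReal) / ((n : ENNReal) + 1) ≤
        (⌈((n : ℝ) + 1) * β'⌉₊ : ENNReal) / ((n : ENNReal) + 1)) := by
  refine ⟨fun β _ h1 hn => ?_, fun β β' _ _ hle => ?_⟩
  · set k := ⌈((n : ℝ) + 1) * β⌉₊
    have hevent : {ω | s (Fin.last n) ω ≤
        orderStat (fun i : Fin n => s i.castSucc ω) ⟨k - 1, by omega⟩} =ᵐ[P]
          {ω | rank (fun i => s i ω) (Fin.last n) < k} := by
      refine Filter.eventuallyEq_set.2 (hdist.mono fun ω hω => ?_)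
      exact (last_le_orderStat_iff hω _).trans (Nat.le_sub_one_iff_lt (by omega))
    rw [measure_congr hevent, hexch.measure_rank_lt hmeas hdist _ (by omega)]
    push_cast
    rfl
  · gcongr
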